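/- Fix η > 0 and ε ∈ (0,1), and suppose that there is no (f,g)-fixed point (x,y) for ε with x ∈ (0,1] and y ∈ [0,1]. Let ε1 := inf{ x / λ1(1−ρ1(1−x)) : x ∈ (0,1] }, and define the scheduled sequences x_0 = y_0 = 1, x_{l+1} = f(ε, x_l, y_l) for all l ≥ 0, and for l ≥ 1: y_{l+1} = g(ε, x_l, y_l) if |x_{l−1} − x_l| ≤ η and ε·Λ2(1−ρ2(1−y_l)) ≥ ε1, and y_{l+1} = y_l otherwise (and y_1 = g(ε, x_0, y_0)). Then the scheduling scheme is valid: x_l → 0 as l → ∞. -/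

import Mathlib

open Polynomial Set Filter Topology

/-!
Both density-evolution maps are monotone on `[0,1]²`, and at every step the schedule moves
`(x_l, y_l)` inside the box spanned by the current point and its image `(f, g)(x_l, y_l)`.
Starting from the top corner `(1, 1)`, the sequence is therefore coordinatewise nonincreasing and
converges to some `(x*, y*)` with `x* = f(ε, x*, y*)`. If layer 2 is eventually updated at every
step, then also `y* = g(ε, x*, y*)`, and the absence of fixed points forces `x* = 0`. Otherwise
the threshold test fails at some `y_{l₀}`; from then on `y` is frozen, so the test keeps failing,
and `x* = ε_eff(y_{l₀}) · λ₁(1 - ρ₁(1 - x*))` with `ε_eff(y_{l₀}) < ε₁`, which by the definition of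
`ε₁` as an infimum is only possible for `x* = 0`.
-/

def IsDegreeDistribution (P : ℝ[X]) : Prop :=
  (∀ i, 0 ≤ P.coeff i) ∧ P.eval 1 = 1

namespace Polynomial

variable {P : ℝ[X]}

theorem eval_nonneg_of_coeff_nonneg (hP : ∀ i, 0 ≤ P.coeff i) {a : ℝ} (ha : 0 ≤ a) :
    0 ≤ P.eval a := by
  rw [eval_eq_sum_range]
  exact Finset.sum_nonneg fun i _ => mul_nonneg (hP i) (pow_nonneg ha i)

theorem monotoneOn_eval_of_coeff_nonneg (hP : ∀ i, 0 ≤ P.coeff i) :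
    MonotoneOn P.eval (Ici 0) := by
  intro a ha b _ hab
  change P.eval a ≤ P.eval b
  rw [eval_eq_sum_range, eval_eq_sum_range]
  exact Finset.sum_le_sum fun i _ => mul_le_mul_of_nonneg_left (pow_le_pow_left₀ ha hab i) (hP i)

end Polynomial

theorem IsDegreeDistribution.mapsTo_Icc {P : ℝ[X]} (hP : IsDegreeDistribution P) :
    MapsTo P.eval (Icc 0 1) (Icc 0 1) := fun _ ha =>
  ⟨eval_nonneg_of_coeff_nonneg hP.1 ha.1,
    hP.2 ▸ monotoneOn_eval_of_coeff_nonneg hP.1 ha.1 (mem_Ici.2 zero_le_one) ha.2⟩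

theorem mapsTo_one_sub_Icc : MapsTo (fun x : ℝ => 1 - x) (Icc 0 1) (Icc 0 1) := fun _ hx =>
  ⟨sub_nonneg.2 hx.2, sub_le_self 1 hx.1⟩

/-- `λ(1 - ρ(1 - x))` for `ρ = R`, `λ = L`: one round of density evolution on the erasure
channel. -/
noncomputable def erasureUpdate (R L : ℝ[X]) (x : ℝ) : ℝ :=
  L.eval (1 - R.eval (1 - x))

section ErasureUpdate

variable {R L : ℝ[X]}

theorem continuous_erasureUpdate (R L : ℝ[X]) : Continuous (erasureUpdate R L) :=
  L.continuous.comp (continuous_const.sub (R.continuous.comp (continuous_const.sub continuous_id)))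

theorem mapsTo_erasureUpdate (hR : IsDegreeDistribution R) (hL : IsDegreeDistribution L) :
    MapsTo (erasureUpdate R L) (Icc 0 1) (Icc 0 1) :=
  hL.mapsTo_Icc.comp (mapsTo_one_sub_Icc.comp (hR.mapsTo_Icc.comp mapsTo_one_sub_Icc))

theorem monotoneOn_erasureUpdate (hR : IsDegreeDistribution R) (hL : ∀ i, 0 ≤ L.coeff i) :
    MonotoneOn (erasureUpdate R L) (Icc 0 1) := by
  intro x hx y hy hxy
  have hx' := mapsTo_one_sub_Icc (hR.mapsTo_Icc (mapsTo_one_sub_Icc hx))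
  have hy' := mapsTo_one_sub_Icc (hR.mapsTo_Icc (mapsTo_one_sub_Icc hy))
  refine monotoneOn_eval_of_coeff_nonneg hL hx'.1 hy'.1 (sub_le_sub_left ?_ 1)
  exact monotoneOn_eval_of_coeff_nonneg hR.1 (mapsTo_one_sub_Icc hy).1 (mapsTo_one_sub_Icc hx).1
    (sub_le_sub_left hxy 1)

end ErasureUpdate

theorem mem_Icc_zero_one_prod {p : ℝ × ℝ} :
    p ∈ Icc (0 : ℝ × ℝ) 1 ↔ p.1 ∈ Icc 0 1 ∧ p.2 ∈ Icc 0 1 := by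
  simp only [mem_Icc, Prod.le_def, Prod.fst_zero, Prod.snd_zero, Prod.fst_one, Prod.snd_one]
  tauto

/-- `f ε x y = layerMap ε ρ₁ λ₁ ρ₂ Λ₂ (x, y)` and `g ε x y = layerMap ε ρ₁ Λ₁ ρ₂ λ₂ (x, y)`. -/
noncomputable def layerMap (ε : ℝ) (R L R' L' : ℝ[X]) (p : ℝ × ℝ) : ℝ :=
  ε * erasureUpdate R L p.1 * erasureUpdate R' L' p.2

section LayerMap

variable {ε : ℝ} {R L R' L' : ℝ[X]}

theorem continuous_layerMap (ε : ℝ) (R L R' L' : ℝ[X]) : Continuous (layerMap ε R L R' L') :=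
  (continuous_const.mul ((continuous_erasureUpdate R L).comp continuous_fst)).mul
    ((continuous_erasureUpdate R' L').comp continuous_snd)

theorem mapsTo_layerMap (hε : ε ∈ Icc 0 1) (hR : IsDegreeDistribution R)
    (hL : IsDegreeDistribution L) (hR' : IsDegreeDistribution R')
    (hL' : IsDegreeDistribution L') :
    MapsTo (layerMap ε R L R' L') (Icc 0 1) (Icc 0 1) := by
  intro p hp
  rw [mem_Icc_zero_one_prod] at hp
  have h₁ := mapsTo_erasureUpdate hR hL hp.1
  have h₂ := mapsTo_erasureUpdate hR' hL' hp.2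
  exact ⟨mul_nonneg (mul_nonneg hε.1 h₁.1) h₂.1,
    mul_le_one₀ (mul_le_one₀ hε.2 h₁.1 h₁.2) h₂.1 h₂.2⟩

theorem monotoneOn_layerMap (hε : 0 ≤ ε) (hR : IsDegreeDistribution R)
    (hL : IsDegreeDistribution L) (hR' : IsDegreeDistribution R')
    (hL' : IsDegreeDistribution L') :
    MonotoneOn (layerMap ε R L R' L') (Icc 0 1) := by
  intro p hp q hq hpq
  rw [mem_Icc_zero_one_prod] at hp hq
  have h₁ := mapsTo_erasureUpdate hR hL hq.1
  have h₂ := mapsTo_erasureUpdate hR' hL' hp.2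
  exact mul_le_mul (mul_le_mul_of_nonneg_left (monotoneOn_erasureUpdate hR hL.1 hp.1 hq.1 hpq.1) hε)
    (monotoneOn_erasureUpdate hR' hL'.1 hp.2 hq.2 hpq.2) h₂.1 (mul_nonneg hε h₁.1)

end LayerMap

section Lattice

variable {α : Type*} [Lattice α] {Φ : α → α} {p : ℕ → α}

theorem forall_mem_Icc_of_succ_mem_uIcc {a b : α} (hΦ : MapsTo Φ (Icc a b) (Icc a b))
    (h0 : p 0 ∈ Icc a b) (hstep : ∀ n, p (n + 1) ∈ uIcc (p n) (Φ (p n))) :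
    ∀ n, p n ∈ Icc a b
  | 0 => h0
  | n + 1 =>
    have hn := forall_mem_Icc_of_succ_mem_uIcc hΦ h0 hstep n
    uIcc_subset_Icc hn (hΦ hn) (hstep n)

/-- `Φ (p n) ≤ p n` propagates: it squeezes `p (n + 1)` into `Icc (Φ (p n)) (p n)`, and then
`Φ (p (n + 1)) ≤ Φ (p n) ≤ p (n + 1)`. -/
theorem antitone_of_succ_mem_uIcc {s : Set α} (hΦ : MonotoneOn Φ s) (hs : ∀ n, p n ∈ s)
    (h0 : Φ (p 0) ≤ p 0) (hstep : ∀ n, p (n + 1) ∈ uIcc (p n) (Φ (p n))) : Antitone p := by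
  have hle_of_post : ∀ n, Φ (p n) ≤ p n → p (n + 1) ∈ Icc (Φ (p n)) (p n) := fun n h =>
    uIcc_of_ge h ▸ hstep n
  have hpost : ∀ n, Φ (p n) ≤ p n := by
    intro n
    induction n with
    | zero => exact h0
    | succ n ih =>
      obtain ⟨hlow, hsucc⟩ := hle_of_post n ih
      exact (hΦ (hs _) (hs _) hsucc).trans hlow
  exact antitone_nat_of_succ_le fun n => (hle_of_post n (hpost n)).2

end Lattice

theorem exists_tendsto_of_antitone_of_mem_Icc {p : ℕ → ℝ × ℝ} {a b : ℝ × ℝ} (hp : Antitone p)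
    (hmem : ∀ n, p n ∈ Icc a b) : ∃ q ∈ Icc a b, Tendsto p atTop (𝓝 q) := by
  have h₁ := tendsto_atTop_ciInf (monotone_fst.comp_antitone hp)
    ⟨a.1, forall_mem_range.2 fun n => (hmem n).1.1⟩
  have h₂ := tendsto_atTop_ciInf (monotone_snd.comp_antitone hp)
    ⟨a.2, forall_mem_range.2 fun n => (hmem n).1.2⟩
  have hlim := h₁.prodMk_nhds h₂
  exact ⟨_, isClosed_Icc.mem_of_tendsto hlim (Eventually.of_forall hmem), hlim⟩

theorem eq_of_tendsto_of_eventually_succ_eq {X Y : Type*} [TopologicalSpace X] [T2Space X]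
    [TopologicalSpace Y] {u : ℕ → X} {v : ℕ → Y} {φ : Y → X} {a : X} {b : Y}
    (hu : Tendsto u atTop (𝓝 a)) (hv : Tendsto v atTop (𝓝 b)) (hφ : ContinuousAt φ b)
    (h : ∀ᶠ n in atTop, u (n + 1) = φ (v n)) : a = φ b :=
  tendsto_nhds_unique ((tendsto_add_atTop_iff_nat 1).2 hu)
    ((hφ.tendsto.comp hv).congr' (h.mono fun _ hn => hn.symm))

theorem eventually_abs_sub_pred_le {u : ℕ → ℝ} {a : ℝ} (hu : Tendsto u atTop (𝓝 a)) {η : ℝ}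
    (hη : 0 < η) : ∀ᶠ n in atTop, |u (n - 1) - u n| ≤ η := by
  have h := ((hu.comp (tendsto_sub_atTop_nat 1)).sub hu).abs
  rw [sub_self, abs_zero] at h
  exact (h.eventually_lt_const hη).mono fun _ hn => hn.le

theorem eq_of_le_of_not_imp_succ_eq {α : Type*} {u : ℕ → α} {P : α → Prop} {m : ℕ}
    (h : ∀ n, m ≤ n → ¬ P (u n) → u (n + 1) = u n) (hm : ¬ P (u m)) :
    ∀ n, m ≤ n → u n = u m := by
  intro n hn
  induction n, hn using Nat.le_induction with
  | base => rfl
  | succ n hmn ih => exact (h n hmn (ih ▸ hm)).trans ih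

theorem eventually_update_or_eventually_frozen {xs ys : ℕ → ℝ} {g : ℝ → ℝ → ℝ} {T : ℝ → Prop}
    {a η : ℝ} (hx : Tendsto xs atTop (𝓝 a)) (hη : 0 < η)
    (hrec : ∀ l, 1 ≤ l →
      ((|xs (l - 1) - xs l| ≤ η ∧ T (ys l)) → ys (l + 1) = g (xs l) (ys l)) ∧
      (¬ (|xs (l - 1) - xs l| ≤ η ∧ T (ys l)) → ys (l + 1) = ys l)) :
    (∀ᶠ l in atTop, ys (l + 1) = g (xs l) (ys l)) ∨
      ∃ l₀, ¬ T (ys l₀) ∧ ys =ᶠ[atTop] fun _ => ys l₀ := by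
  by_cases hT : ∀ l, 1 ≤ l → T (ys l)
  · exact Or.inl (((eventually_abs_sub_pred_le hx hη).and (eventually_ge_atTop 1)).mono
      fun l ⟨hsmall, hl⟩ => (hrec l hl).1 ⟨hsmall, hT l hl⟩)
  · push Not at hT
    obtain ⟨l₀, hl₀, hl₀T⟩ := hT
    refine Or.inr ⟨l₀, hl₀T, (eventually_ge_atTop l₀).mono (eq_of_le_of_not_imp_succ_eq ?_ hl₀T)⟩
    exact fun l hl h => (hrec l (hl₀.trans hl)).2 fun hc => h hc.2

theorem eq_zero_of_eq_mul_of_lt_sInf {φ : ℝ → ℝ} {c x : ℝ} (hφ : ∀ y ∈ Ioc (0 : ℝ) 1, 0 ≤ φ y)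
    (hx : x ∈ Icc 0 1) (hfix : x = c * φ x)
    (hc : c < sInf ((fun y => y / φ y) '' Ioc 0 1)) : x = 0 := by
  by_contra hne
  have hx' : x ∈ Ioc 0 1 := ⟨lt_of_le_of_ne hx.1 (Ne.symm hne), hx.2⟩
  have hφx : 0 < φ x := by
    refine lt_of_le_of_ne (hφ x hx') fun h => hne ?_
    rw [hfix, ← h, mul_zero]
  have hbdd : BddBelow ((fun y => y / φ y) '' Ioc 0 1) :=
    ⟨0, forall_mem_image.2 fun y hy => div_nonneg hy.1.le (hφ y hy)⟩
  have : c < x / φ x := hc.trans_le (csInf_le hbdd (mem_image_of_mem _ hx'))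
  rw [lt_div_iff₀ hφx, ← hfix] at this
  exact lt_irrefl x this

theorem exists_tendsto_fst_eq_of_schedule {F G : ℝ × ℝ → ℝ} {p : ℕ → ℝ × ℝ}
    (hFm : MonotoneOn F (Icc 0 1)) (hGm : MonotoneOn G (Icc 0 1))
    (hFs : MapsTo F (Icc 0 1) (Icc 0 1)) (hGs : MapsTo G (Icc 0 1) (Icc 0 1))
    (hFc : Continuous F) (h0 : p 0 = 1) (hfst : ∀ n, (p (n + 1)).1 = F (p n))
    (hsnd : ∀ n, (p (n + 1)).2 = G (p n) ∨ (p (n + 1)).2 = (p n).2) :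
    ∃ q ∈ Icc 0 1, Tendsto p atTop (𝓝 q) ∧ q.1 = F q := by
  set Φ : ℝ × ℝ → ℝ × ℝ := fun x => (F x, G x)
  have hΦs : MapsTo Φ (Icc 0 1) (Icc 0 1) := fun x hx => mem_Icc_zero_one_prod.2 ⟨hFs hx, hGs hx⟩
  have hΦm : MonotoneOn Φ (Icc 0 1) := fun x hx y hy hxy => ⟨hFm hx hy hxy, hGm hx hy hxy⟩
  have hstep : ∀ n, p (n + 1) ∈ uIcc (p n) (Φ (p n)) := by
    intro n
    rw [uIcc_prod_eq]
    refine ⟨hfst n ▸ right_mem_uIcc, ?_⟩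
    rcases hsnd n with h | h <;> rw [h]
    exacts [right_mem_uIcc, left_mem_uIcc]
  have h0' : p 0 ∈ Icc 0 1 := by rw [h0]; exact right_mem_Icc.2 zero_le_one
  have hmem := forall_mem_Icc_of_succ_mem_uIcc hΦs h0' hstep
  have hanti := antitone_of_succ_mem_uIcc hΦm hmem ((hΦs h0').2.trans h0.ge) hstep
  obtain ⟨q, hq, hlim⟩ := exists_tendsto_of_antitone_of_mem_Icc hanti hmem
  exact ⟨q, hq, hlim, eq_of_tendsto_of_eventually_succ_eq ((continuous_fst.tendsto q).comp hlim)
    hlim hFc.continuousAt (Eventually.of_forall hfst)⟩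

theorem stmt_15_general
    (L1 R1 L2 R2 B1 B2 : Polynomial ℝ)
    (hL1c : ∀ i, 0 ≤ L1.coeff i) (hR1c : ∀ i, 0 ≤ R1.coeff i)
    (hL2c : ∀ i, 0 ≤ L2.coeff i) (hR2c : ∀ i, 0 ≤ R2.coeff i)
    (hB1c : ∀ i, 0 ≤ B1.coeff i) (hB2c : ∀ i, 0 ≤ B2.coeff i)
    (hL1one : L1.eval 1 = 1) (hR1one : R1.eval 1 = 1)
    (hL2one : L2.eval 1 = 1) (hR2one : R2.eval 1 = 1)
    (hB1one : B1.eval 1 = 1) (hB2one : B2.eval 1 = 1)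
    (f g : ℝ → ℝ → ℝ → ℝ)
    (hf : ∀ ε x y, f ε x y = ε * L1.eval (1 - R1.eval (1 - x)) * B2.eval (1 - R2.eval (1 - y)))
    (hg : ∀ ε x y, g ε x y = ε * B1.eval (1 - R1.eval (1 - x)) * L2.eval (1 - R2.eval (1 - y)))
    (η : ℝ) (hη : 0 < η)
    (ε : ℝ) (hε : ε ∈ Ioo (0:ℝ) 1)
    (hnofix : ¬ ∃ x y : ℝ, x ∈ Ioc (0:ℝ) 1 ∧ y ∈ Icc (0:ℝ) 1 ∧ x = f ε x y ∧ y = g ε x y)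
    (ε1 : ℝ)
    (hε1 : ε1 = sInf ((fun x => x / L1.eval (1 - R1.eval (1 - x))) '' Ioc (0:ℝ) 1))
    (xs ys : ℕ → ℝ)
    (hxs0 : xs 0 = 1) (hys0 : ys 0 = 1)
    (hxsrec : ∀ l, xs (l + 1) = f ε (xs l) (ys l))
    (hys1 : ys 1 = g ε (xs 0) (ys 0))
    (hysrec : ∀ l, 1 ≤ l →
      ((|xs (l - 1) - xs l| ≤ η ∧ ε1 ≤ ε * B2.eval (1 - R2.eval (1 - ys l))) →
          ys (l + 1) = g ε (xs l) (ys l)) ∧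
      (¬ (|xs (l - 1) - xs l| ≤ η ∧ ε1 ≤ ε * B2.eval (1 - R2.eval (1 - ys l))) →
          ys (l + 1) = ys l)) :
    Tendsto xs atTop (nhds 0) := by
  obtain ⟨hR1, hR2, hL1, hL2, hB1, hB2⟩ : IsDegreeDistribution R1 ∧ IsDegreeDistribution R2 ∧
      IsDegreeDistribution L1 ∧ IsDegreeDistribution L2 ∧ IsDegreeDistribution B1 ∧
      IsDegreeDistribution B2 :=
    ⟨⟨hR1c, hR1one⟩, ⟨hR2c, hR2one⟩, ⟨hL1c, hL1one⟩, ⟨hL2c, hL2one⟩, ⟨hB1c, hB1one⟩, ⟨hB2c, hB2one⟩⟩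
  have hF : (fun p : ℝ × ℝ => f ε p.1 p.2) = layerMap ε R1 L1 R2 B2 := funext fun p => hf ε _ _
  have hG : (fun p : ℝ × ℝ => g ε p.1 p.2) = layerMap ε R1 B1 R2 L2 := funext fun p => hg ε _ _
  have hys : ∀ l, ys (l + 1) = g ε (xs l) (ys l) ∨ ys (l + 1) = ys l := by
    rintro (_ | l)
    · exact Or.inl hys1
    · exact (em _).imp (hysrec (l + 1) l.succ_pos).1 (hysrec (l + 1) l.succ_pos).2
  obtain ⟨q, hq, hlim, hqF⟩ := exists_tendsto_fst_eq_of_schedule (p := fun l => (xs l, ys l))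
    (hF ▸ monotoneOn_layerMap hε.1.le hR1 hL1 hR2 hB2)
    (hG ▸ monotoneOn_layerMap hε.1.le hR1 hB1 hR2 hL2)
    (hF ▸ mapsTo_layerMap (Ioo_subset_Icc_self hε) hR1 hL1 hR2 hB2)
    (hG ▸ mapsTo_layerMap (Ioo_subset_Icc_self hε) hR1 hB1 hR2 hL2)
    (hF ▸ continuous_layerMap ..) (Prod.ext hxs0 hys0) hxsrec hys
  rw [mem_Icc_zero_one_prod] at hq
  have hxlim : Tendsto xs atTop (𝓝 q.1) := (continuous_fst.tendsto q).comp hlim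
  have hylim : Tendsto ys atTop (𝓝 q.2) := (continuous_snd.tendsto q).comp hlim
  suffices hq0 : q.1 = 0 from hq0 ▸ hxlim
  by_contra hne
  rcases eventually_update_or_eventually_frozen (g := g ε)
      (T := fun y => ε1 ≤ ε * B2.eval (1 - R2.eval (1 - y))) hxlim hη hysrec with
    hupd | ⟨l₀, hlt, hfrozen⟩
  · have hqG : q.2 = g ε q.1 q.2 := eq_of_tendsto_of_eventually_succ_eq
      (φ := fun p : ℝ × ℝ => g ε p.1 p.2) hylim hlim (hG ▸ continuous_layerMap ..).continuousAt hupd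
    exact hnofix ⟨q.1, q.2, ⟨lt_of_le_of_ne hq.1.1 (Ne.symm hne), hq.1.2⟩, hq.2, hqF, hqG⟩
  · have hq2 : q.2 = ys l₀ := tendsto_nhds_unique hylim (tendsto_const_nhds.congr' hfrozen.symm)
    refine hne (eq_zero_of_eq_mul_of_lt_sInf (c := ε * B2.eval (1 - R2.eval (1 - ys l₀)))
      (fun y hy => (mapsTo_erasureUpdate hR1 hL1 (Ioc_subset_Icc_self hy)).1) hq.1 ?_
      (hε1 ▸ not_le.1 hlt))
    exact hqF.trans (by rw [hf, hq2, erasureUpdate]; ring)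

/-- Lemma 7: for every `η > 0`, the proposed scheduling scheme is valid: if the channel
parameter `ε` admits no non-trivial `(f,g)`-fixed point, then `x_l → 0`. -/
theorem stmt_15
    (L1 R1 L2 R2 B1 B2 : Polynomial ℝ)
    (hL1c : ∀ i, 0 ≤ L1.coeff i) (hR1c : ∀ i, 0 ≤ R1.coeff i)
    (hL2c : ∀ i, 0 ≤ L2.coeff i) (hR2c : ∀ i, 0 ≤ R2.coeff i)
    (hB1c : ∀ i, 0 ≤ B1.coeff i) (hB2c : ∀ i, 0 ≤ B2.coeff i)
    (hL1one : L1.eval 1 = 1) (hR1one : R1.eval 1 = 1)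
    (hL2one : L2.eval 1 = 1) (hR2one : R2.eval 1 = 1)
    (hB1one : B1.eval 1 = 1) (hB2one : B2.eval 1 = 1)
    (hL1zero : L1.eval 0 = 0) (hB10 : B1.coeff 0 = 0) (hB11 : B1.coeff 1 = 0)
    (f g : ℝ → ℝ → ℝ → ℝ)
    (hf : ∀ ε x y, f ε x y = ε * L1.eval (1 - R1.eval (1 - x)) * B2.eval (1 - R2.eval (1 - y)))
    (hg : ∀ ε x y, g ε x y = ε * B1.eval (1 - R1.eval (1 - x)) * L2.eval (1 - R2.eval (1 - y)))
    (η : ℝ) (hη : 0 < η)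
    (ε : ℝ) (hε : ε ∈ Ioo (0:ℝ) 1)
    (hnofix : ¬ ∃ x y : ℝ, x ∈ Ioc (0:ℝ) 1 ∧ y ∈ Icc (0:ℝ) 1 ∧ x = f ε x y ∧ y = g ε x y)
    (ε1 : ℝ)
    (hε1 : ε1 = sInf ((fun x => x / L1.eval (1 - R1.eval (1 - x))) '' Ioc (0:ℝ) 1))
    (xs ys : ℕ → ℝ)
    (hxs0 : xs 0 = 1) (hys0 : ys 0 = 1)
    (hxsrec : ∀ l, xs (l + 1) = f ε (xs l) (ys l))
    (hys1 : ys 1 = g ε (xs 0) (ys 0))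
    (hysrec : ∀ l, 1 ≤ l →
      ((|xs (l - 1) - xs l| ≤ η ∧ ε1 ≤ ε * B2.eval (1 - R2.eval (1 - ys l))) →
          ys (l + 1) = g ε (xs l) (ys l)) ∧
      (¬ (|xs (l - 1) - xs l| ≤ η ∧ ε1 ≤ ε * B2.eval (1 - R2.eval (1 - ys l))) →
          ys (l + 1) = ys l)) :
    Tendsto xs atTop (nhds 0) :=
  stmt_15_general L1 R1 L2 R2 B1 B2 hL1c hR1c hL2c hR2c hB1c hB2c hL1one hR1one hL2one hR2one hB1one
    hB2one f g hf hg η hη ε hε hnofix ε1 hε1 xs ys hxs0 hys0 hxsrec hys1 hysrec
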